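/- Let Σ be a symmetric positive definite n×n real matrix, 𝟙 ∈ ℝⁿ the all-ones vector, D = 𝟙ᵀΣ⁻¹𝟙, w = Σ⁻¹𝟙 / D, and let Σ_true be a symmetric n×n real matrix. The regret map L : A ↦ w*(A)ᵀ Σ_true w*(A), where w*(A) = A⁻¹𝟙 / (𝟙ᵀA⁻¹𝟙), is Fréchet differentiable at Σ, and its derivative in an arbitrary direction H (an n×n matrix) equals the chain-rule composition D_Σ L [H] = (2 Σ_true w)ᵀ ( −Σ⁻¹ H w + D (wᵀ H w) w ). -/

import Mathlib

/-!
The regret is the quadratic form `x ↦ xᵀ Σ_true x`, whose derivative at `w` is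
`h ↦ 2 (Σ_true w)ᵀ h` by symmetry, composed with the GMVP map. The latter is the normalisation
`u ↦ u / (𝟙ᵀ u)` applied to `u = A⁻¹ 𝟙`; since `d(A⁻¹)[H] = −Σ⁻¹ H Σ⁻¹` and `u = D w`, the chain
rule gives `−Σ⁻¹ H w + D (wᵀ H w) w`, the symmetry of `Σ⁻¹` turning `𝟙ᵀ Σ⁻¹ H u` into `D² wᵀ H w`.
-/

open Matrix

noncomputable section

attribute [local instance] Matrix.normedAddCommGroup Matrix.normedSpace

def ones (n : ℕ) : Fin n → ℝ := fun _ => 1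

/-- `D = 𝟙ᵀ Σ⁻¹ 𝟙`. -/
def Dcoef (n : ℕ) (S : Matrix (Fin n) (Fin n) ℝ) : ℝ :=
  ones n ⬝ᵥ (S⁻¹ *ᵥ ones n)

/-- The GMVP map `w*(A) = A⁻¹𝟙 / (𝟙ᵀA⁻¹𝟙)`. -/
def gmvp (n : ℕ) (S : Matrix (Fin n) (Fin n) ℝ) : Fin n → ℝ :=
  (Dcoef n S)⁻¹ • (S⁻¹ *ᵥ ones n)

theorem map_ringInverse {F M N : Type*} [MonoidWithZero M] [MonoidWithZero N] [EquivLike F M N]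
    [MulEquivClass F M N] (e : F) (x : M) : e (Ring.inverse x) = Ring.inverse (e x) := by
  by_cases hx : IsUnit x
  · obtain ⟨u, rfl⟩ := hx
    have he_unit : e u = Units.map (e : M →* N) u := rfl
    rw [Ring.inverse_unit, he_unit, Ring.inverse_unit, ← map_inv, Units.coe_map]
    rfl
  · have hex : ¬IsUnit (e x) := by rwa [MulEquiv.isUnit_map]
    rw [Ring.inverse_non_unit _ hx, Ring.inverse_non_unit _ hex, map_zero]

theorem ContinuousLinearMap.hasFDerivAt_inv_apply_smul_self {𝕜 E : Type*}
    [NontriviallyNormedField 𝕜] [NormedAddCommGroup E] [NormedSpace 𝕜 E] (φ : E →L[𝕜] 𝕜)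
    {v : E} (hv : φ v ≠ 0) :
    ∃ N : E →L[𝕜] E, HasFDerivAt (fun x => (φ x)⁻¹ • x) N v ∧
      ∀ h, N h = (φ v)⁻¹ • (h - (φ h * (φ v)⁻¹) • v) := by
  refine ⟨_, ((hasFDerivAt_inv hv).comp v φ.hasFDerivAt).smul (hasFDerivAt_id v), fun h => ?_⟩
  simp only [Function.comp_apply, _root_.add_apply, _root_.smul_apply, id_apply, smulRight_apply,
    comp_apply, toSpanSingleton_apply, smul_eq_mul, mul_neg, neg_smul]
  rw [smul_sub, smul_smul, sub_eq_add_neg]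
  congr 3
  ring

theorem Matrix.hasFDerivAt_inv {𝕜 m : Type*} [RCLike 𝕜] [Fintype m] [DecidableEq m]
    {S : Matrix m m 𝕜} (hS : IsUnit S) :
    ∃ L : Matrix m m 𝕜 →L[𝕜] Matrix m m 𝕜,
      HasFDerivAt (fun A : Matrix m m 𝕜 => A⁻¹) L S ∧ ∀ H, L H = -(S⁻¹ * H * S⁻¹) := by
  -- The entrywise norm is not submultiplicative, so the derivative of the inverse is transported
  -- from the Banach algebra of operators on Euclidean space.
  let φ := toEuclideanCLM (n := m) (𝕜 := 𝕜)
  let e := φ.toAlgEquiv.toLinearEquiv.toContinuousLinearEquiv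
  have he : ∀ A, e A = φ A := fun _ => rfl
  have he_inv : ∀ A, e A⁻¹ = Ring.inverse (e A) := fun A => by
    rw [he, he, nonsing_inv_eq_ringInverse, map_ringInverse]
  have hinv : (fun A : Matrix m m 𝕜 => A⁻¹) = fun A => e.symm (Ring.inverse (e A)) := by
    funext A
    rw [ContinuousLinearEquiv.eq_symm_apply, he_inv]
  have hU : IsUnit (e S) := by
    rwa [he, MulEquiv.isUnit_map]
  have hderiv := hasFDerivAt_ringInverse (𝕜 := 𝕜) hU.unit
  rw [IsUnit.unit_spec, ← Ring.inverse_of_isUnit, ← he_inv] at hderiv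
  rw [hinv]
  refine ⟨_, e.symm.hasFDerivAt.comp S (hderiv.comp S e.hasFDerivAt), fun H => ?_⟩
  change e.symm (-(e S⁻¹ * e H * e S⁻¹)) = _
  rw [ContinuousLinearEquiv.symm_apply_eq]
  simp only [he, map_neg, map_mul]

theorem Matrix.IsSymm.dotProduct_mulVec_comm {R m : Type*} [CommSemiring R] [Fintype m]
    {A : Matrix m m R} (hA : A.IsSymm) (x y : m → R) : x ⬝ᵥ (A *ᵥ y) = (A *ᵥ x) ⬝ᵥ y := by
  rw [dotProduct_mulVec, ← mulVec_transpose, hA.eq]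

theorem Matrix.IsSymm.hasFDerivAt_dotProduct_mulVec {𝕜 m : Type*} [NontriviallyNormedField 𝕜]
    [CompleteSpace 𝕜] [Fintype m] {T : Matrix m m 𝕜} (hT : T.IsSymm) (x : m → 𝕜) :
    ∃ Q : (m → 𝕜) →L[𝕜] 𝕜, HasFDerivAt (fun y => y ⬝ᵥ (T *ᵥ y)) Q x ∧
      ∀ h, Q h = ((2 : 𝕜) • (T *ᵥ x)) ⬝ᵥ h := by
  let B : (m → 𝕜) →L[𝕜] (m → 𝕜) →L[𝕜] 𝕜 :=
    LinearMap.toContinuousLinearMap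
      (LinearMap.toContinuousLinearMap.toLinearMap ∘ₗ dotProductBilin 𝕜 𝕜)
  let M : (m → 𝕜) →L[𝕜] (m → 𝕜) := LinearMap.toContinuousLinearMap T.mulVecLin
  refine ⟨_, B.hasFDerivAt_of_bilinear (hasFDerivAt_id x) M.hasFDerivAt, fun h => ?_⟩
  change x ⬝ᵥ (T *ᵥ h) + h ⬝ᵥ (T *ᵥ x) = _
  rw [hT.dotProduct_mulVec_comm, dotProduct_comm h, two_smul, add_dotProduct]

theorem hasFDerivAt_gmvp {n : ℕ} {S : Matrix (Fin n) (Fin n) ℝ} (hS_unit : IsUnit S)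
    (hS_symm : S.IsSymm) (hD : Dcoef n S ≠ 0) :
    ∃ W : Matrix (Fin n) (Fin n) ℝ →L[ℝ] (Fin n → ℝ), HasFDerivAt (gmvp n) W S ∧
      ∀ H, W H = -(S⁻¹ *ᵥ (H *ᵥ gmvp n S)) +
        (Dcoef n S * (gmvp n S ⬝ᵥ (H *ᵥ gmvp n S))) • gmvp n S := by
  obtain ⟨L, hL, hL_apply⟩ := Matrix.hasFDerivAt_inv hS_unit
  let ev : Matrix (Fin n) (Fin n) ℝ →L[ℝ] (Fin n → ℝ) :=
    LinearMap.toContinuousLinearMap ((mulVecBilin ℝ ℝ).flip (ones n))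
  let φ : (Fin n → ℝ) →L[ℝ] ℝ := LinearMap.toContinuousLinearMap (dotProductBilin ℝ ℝ (ones n))
  obtain ⟨N, hN, hN_apply⟩ := φ.hasFDerivAt_inv_apply_smul_self (v := S⁻¹ *ᵥ ones n) hD
  have hgmvp := hN.comp S (ev.hasFDerivAt.comp S hL)
  refine ⟨N.comp (ev.comp L), hgmvp, fun H => ?_⟩
  have hφ : ∀ y, φ y = ones n ⬝ᵥ y := fun _ => rfl
  have hev : ∀ M, ev M = M *ᵥ ones n := fun _ => rfl
  have hD_def : ones n ⬝ᵥ (S⁻¹ *ᵥ ones n) = Dcoef n S := rfl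
  have hu : S⁻¹ *ᵥ ones n = Dcoef n S • gmvp n S := by
    rw [gmvp, smul_smul, mul_inv_cancel₀ hD, one_smul]
  rw [ContinuousLinearMap.comp_apply, ContinuousLinearMap.comp_apply, hN_apply, hL_apply, hev, hφ,
    hφ, hD_def, neg_mulVec, ← mulVec_mulVec, ← mulVec_mulVec, dotProduct_neg,
    hS_symm.inv.dotProduct_mulVec_comm (ones n), hu]
  simp only [mulVec_smul, smul_dotProduct, dotProduct_smul, smul_eq_mul]
  match_scalars <;> field_simp

theorem Matrix.PosDef.dcoef_pos {n : ℕ} {S : Matrix (Fin n) (Fin n) ℝ} (hS : S.PosDef)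
    (hn : 1 ≤ n) : 0 < Dcoef n S := by
  have hones : ones n ≠ 0 := fun h => by simpa [ones] using congrFun h ⟨0, hn⟩
  simpa [Dcoef] using hS.inv.dotProduct_mulVec_pos hones

/-- The regret map `L : A ↦ w*(A)ᵀ Σ_true w*(A)` is Fréchet differentiable at a
symmetric positive definite `Σ`, and its derivative in direction `H` equals the
chain-rule composition `D_Σ L [H] = (2 Σ_true w)ᵀ (−Σ⁻¹ H w + D (wᵀ H w) w)`,
where `D = 𝟙ᵀΣ⁻¹𝟙` and `w = Σ⁻¹𝟙 / D`. -/
theorem regret_hasFDerivAt (n : ℕ) (hn : 1 ≤ n)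
    (S : Matrix (Fin n) (Fin n) ℝ) (hS : S.PosDef)
    (Strue : Matrix (Fin n) (Fin n) ℝ) (hStrue : Strue.IsSymm) :
    ∃ L : Matrix (Fin n) (Fin n) ℝ →L[ℝ] ℝ,
      HasFDerivAt (fun A : Matrix (Fin n) (Fin n) ℝ =>
          gmvp n A ⬝ᵥ (Strue *ᵥ gmvp n A)) L S ∧
        ∀ H : Matrix (Fin n) (Fin n) ℝ,
          L H = ((2 : ℝ) • (Strue *ᵥ gmvp n S)) ⬝ᵥ
            (-(S⁻¹ *ᵥ (H *ᵥ gmvp n S)) +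
              (Dcoef n S * (gmvp n S ⬝ᵥ (H *ᵥ gmvp n S))) • gmvp n S) := by
  obtain ⟨W, hW, hW_apply⟩ :=
    hasFDerivAt_gmvp hS.isUnit (isHermitian_iff_isSymm.mp hS.isHermitian) (hS.dcoef_pos hn).ne'
  obtain ⟨Q, hQ, hQ_apply⟩ := hStrue.hasFDerivAt_dotProduct_mulVec (gmvp n S)
  refine ⟨Q.comp W, hQ.comp S hW, fun H => ?_⟩
  rw [ContinuousLinearMap.comp_apply, hQ_apply, hW_apply]

end
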